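/- arXiv:1108.2783 — 6 statements merged into one kernel-verified Lean document; each statement's English description precedes it below -/
import Mathlib

section
/- Let A be an n×n real matrix, B an n×m real matrix, h > 0, α > 0, β > 0, q a positive natural number, and 0 < a ≤ ā. Let V : ℝⁿ → ℝ satisfy a‖x‖∞^q ≤ V(x) ≤ ā‖x‖∞^q for all x ∈ ℝⁿ. Suppose (x_k)_{k∈ℕ} in ℝⁿ and (û_k)_{k∈ℕ} in ℝᵐ satisfy, for every k: ‖û_k‖∞ ≤ β‖x_k‖∞, V(exp(hA)·x_k + (∫₀^h exp(sA) ds)·B·û_k) ≤ e^{−αqh}·V(x_k), and x_{k+1} = exp(hA)·x_k + (∫₀^h exp(sA) ds)·B·û_k. Define x : [0,∞) → ℝⁿ by x(t) = exp((t−kh)A)·x_k + (∫₀^{t−kh} exp(sA) ds)·B·û_k for t ∈ [kh,(k+1)h), k ∈ ℕ. Then for all t ≥ 0, ‖x(t)‖∞ ≤ c·e^{−αt}·‖x_0‖∞, where c = (ā/a)^{1/q}·(e^{‖A‖∞ h} + β·(∫₀^h e^{‖A‖∞ s} ds)·‖B‖∞)·e^{αh}. -/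
open Matrix

attribute [local instance] Matrix.linftyOpNormedAddCommGroup Matrix.linftyOpNormedRing
  Matrix.linftyOpNormedAlgebra

/-- Matrix exponential `exp (t • A)` of a square real matrix. -/
noncomputable def mexp {n : ℕ} (t : ℝ) (A : Matrix (Fin n) (Fin n) ℝ) :
    Matrix (Fin n) (Fin n) ℝ :=
  NormedSpace.exp (t • A)

/-- Entrywise integral `∫₀ʰ exp (s • A) ds` of the matrix exponential. -/
noncomputable def mint {n : ℕ} (h : ℝ) (A : Matrix (Fin n) (Fin n) ℝ) :
    Matrix (Fin n) (Fin n) ℝ :=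
  Matrix.of fun i j => ∫ s in (0:ℝ)..h, mexp s A i j

lemma my_norm_exp_le {𝔸 : Type*} [NormedRing 𝔸] [NormedAlgebra ℝ 𝔸] [CompleteSpace 𝔸]
    [NormOneClass 𝔸] (x : 𝔸) : ‖NormedSpace.exp x‖ ≤ Real.exp ‖x‖ := by
  rw [NormedSpace.exp_eq_tsum ℝ]
  refine (norm_tsum_le_tsum_norm (NormedSpace.norm_expSeries_summable' x)).trans ?_
  rw [Real.exp_eq_exp_ℝ, NormedSpace.exp_eq_tsum ℝ]
  refine Summable.tsum_le_tsum ?_ (NormedSpace.norm_expSeries_summable' x)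
    (NormedSpace.expSeries_summable' (𝕂 := ℝ) ‖x‖)
  intro n
  rw [norm_smul, smul_eq_mul, Real.norm_eq_abs, abs_of_nonneg (by positivity)]
  exact mul_le_mul_of_nonneg_left (norm_pow_le x n) (by positivity)

lemma norm_mexp_le {n : ℕ} (A : Matrix (Fin n) (Fin n) ℝ) (t : ℝ) :
    ‖mexp t A‖ ≤ Real.exp (|t| * ‖A‖) := by
  cases n with
  | zero =>
    have : mexp t A = 0 := by ext i j; exact i.elim0
    rw [this, norm_zero]; positivity
  | succ n =>
    haveI : CompleteSpace (Matrix (Fin (n+1)) (Fin (n+1)) ℝ) := FiniteDimensional.complete ℝ _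
    refine (my_norm_exp_le _).trans ?_
    rw [norm_smul, Real.norm_eq_abs]

noncomputable def entryCLM {n : ℕ} (i j : Fin n) : Matrix (Fin n) (Fin n) ℝ →L[ℝ] ℝ :=
  LinearMap.toContinuousLinearMap
    { toFun := fun M => M i j, map_add' := fun _ _ => rfl, map_smul' := fun _ _ => rfl }

lemma continuous_mexp {n : ℕ} (A : Matrix (Fin n) (Fin n) ℝ) :
    Continuous fun s : ℝ => mexp s A := by
  unfold mexp; exact NormedSpace.exp_continuous.comp (continuous_id.smul continuous_const)

lemma mint_eq_integral {n : ℕ} (A : Matrix (Fin n) (Fin n) ℝ) (h : ℝ) :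
    mint h A = ∫ s in (0:ℝ)..h, mexp s A := by
  haveI : CompleteSpace (Matrix (Fin n) (Fin n) ℝ) := FiniteDimensional.complete ℝ _
  ext i j
  have := (entryCLM (n := n) i j).intervalIntegral_comp_comm
    ((continuous_mexp A).intervalIntegrable (μ := MeasureTheory.volume) 0 h)
  have e : ∀ M : Matrix (Fin n) (Fin n) ℝ, entryCLM i j M = M i j := fun _ => rfl
  exact this

lemma norm_mint_le {n : ℕ} (A : Matrix (Fin n) (Fin n) ℝ) {h : ℝ} (hh : 0 ≤ h) :
    ‖mint h A‖ ≤ ∫ s in (0:ℝ)..h, Real.exp (‖A‖ * s) := by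
  rw [mint_eq_integral]
  have hInt : IntervalIntegrable (fun s => Real.exp (‖A‖ * s)) MeasureTheory.volume 0 h :=
    (Real.continuous_exp.comp (continuous_const.mul continuous_id)).intervalIntegrable 0 h
  refine (intervalIntegral.norm_integral_le_abs_of_norm_le ?_ hInt).trans_eq
    (abs_of_nonneg (intervalIntegral.integral_nonneg hh fun s _ => (Real.exp_pos _).le))
  rw [Set.uIoc_of_le hh]
  filter_upwards [MeasureTheory.ae_restrict_mem measurableSet_Ioc] with s hs
  refine (norm_mexp_le A s).trans_eq ?_
  rw [abs_of_pos hs.1, mul_comm]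

/-- Lemma 1: a CLF for a single interexecution time `h` implies GES with rate `α`
and gain `(ā/a)^(1/q) * (e^{‖A‖h} + β (∫₀ʰ e^{‖A‖s} ds) ‖B‖) * e^{αh}`. -/
theorem clf_implies_GES {n m : ℕ} (A : Matrix (Fin n) (Fin n) ℝ) (B : Matrix (Fin n) (Fin m) ℝ)
    (h α β a abar : ℝ) (q : ℕ) (V : (Fin n → ℝ) → ℝ)
    (hh : 0 < h) (hα : 0 < α) (hβ : 0 < β) (hq : 0 < q) (ha : 0 < a) (hab : a ≤ abar)
    (hVlow : ∀ x : Fin n → ℝ, a * ‖x‖ ^ q ≤ V x)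
    (hVup : ∀ x : Fin n → ℝ, V x ≤ abar * ‖x‖ ^ q)
    (xs : ℕ → Fin n → ℝ) (us : ℕ → Fin m → ℝ)
    (hu : ∀ k, ‖us k‖ ≤ β * ‖xs k‖)
    (hdec : ∀ k, V (mexp h A *ᵥ xs k + mint h A *ᵥ (B *ᵥ us k)) ≤
      Real.exp (-(α * (q : ℝ) * h)) * V (xs k))
    (hstep : ∀ k, xs (k + 1) = mexp h A *ᵥ xs k + mint h A *ᵥ (B *ᵥ us k))
    (x : ℝ → Fin n → ℝ)
    (hx : ∀ (k : ℕ) (t : ℝ), t ∈ Set.Ico ((k : ℝ) * h) (((k : ℝ) + 1) * h) →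
      x t = mexp (t - (k : ℝ) * h) A *ᵥ xs k + mint (t - (k : ℝ) * h) A *ᵥ (B *ᵥ us k)) :
    ∀ t : ℝ, 0 ≤ t →
      ‖x t‖ ≤ (abar / a) ^ (1 / (q : ℝ)) *
        (Real.exp (‖A‖ * h) + β * (∫ s in (0:ℝ)..h, Real.exp (‖A‖ * s)) * ‖B‖) *
        Real.exp (α * h) * Real.exp (-(α * t)) * ‖xs 0‖ := by
  set I : ℝ := ∫ s in (0:ℝ)..h, Real.exp (‖A‖ * s) with hI
  have hI0 : 0 ≤ I :=
    intervalIntegral.integral_nonneg hh.le fun s _ => (Real.exp_pos _).le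
  set C : ℝ := (abar / a) ^ (1 / (q : ℝ)) with hC
  have hC0 : 0 ≤ C := Real.rpow_nonneg (div_nonneg (ha.trans_le hab).le ha.le) _
  set E : ℝ := Real.exp (‖A‖ * h) + β * I * ‖B‖ with hE
  have hE0 : 0 ≤ E := add_nonneg (Real.exp_pos _).le
    (mul_nonneg (mul_nonneg hβ.le hI0) (norm_nonneg _))
  -- discrete decay of V
  have hVk : ∀ k : ℕ, V (xs k) ≤ Real.exp (-(α * (q : ℝ) * h) * k) * V (xs 0) := by
    intro k
    induction k with
    | zero => simp
    | succ k ih =>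
      have hd := hdec k
      rw [← hstep k] at hd
      calc V (xs (k + 1)) ≤ Real.exp (-(α * (q : ℝ) * h)) * V (xs k) := hd
        _ ≤ Real.exp (-(α * (q : ℝ) * h)) * (Real.exp (-(α * (q : ℝ) * h) * k) * V (xs 0)) :=
            mul_le_mul_of_nonneg_left ih (Real.exp_pos _).le
        _ = Real.exp (-(α * (q : ℝ) * h) * ((k : ℝ) + 1)) * V (xs 0) := by
            rw [← mul_assoc, ← Real.exp_add]; congr 2; ring
        _ = Real.exp (-(α * (q : ℝ) * h) * ((k + 1 : ℕ) : ℝ)) * V (xs 0) := by push_cast; ring_nf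
  -- discrete decay of the norm
  have hxk : ∀ k : ℕ, ‖xs k‖ ≤ C * Real.exp (-(α * h * k)) * ‖xs 0‖ := by
    intro k
    have h1 : a * ‖xs k‖ ^ q ≤ Real.exp (-(α * (q : ℝ) * h) * k) * (abar * ‖xs 0‖ ^ q) :=
      (hVlow _).trans ((hVk k).trans
        (mul_le_mul_of_nonneg_left (hVup _) (Real.exp_pos _).le))
    have hRHS0 : 0 ≤ C * Real.exp (-(α * h * k)) * ‖xs 0‖ :=
      mul_nonneg (mul_nonneg hC0 (Real.exp_pos _).le) (norm_nonneg _)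
    refine le_of_pow_le_pow_left₀ hq.ne' hRHS0 ?_
    have hCq : C ^ q = abar / a := by
      rw [hC, ← Real.rpow_natCast ((abar / a) ^ (1 / (q : ℝ))) q,
        ← Real.rpow_mul (div_nonneg (ha.trans_le hab).le ha.le), one_div,
        inv_mul_cancel₀ (by exact_mod_cast hq.ne'), Real.rpow_one]
    have hexpq : (Real.exp (-(α * h * k))) ^ q = Real.exp (-(α * (q : ℝ) * h) * k) := by
      rw [← Real.exp_nat_mul]; congr 1; ring
    rw [mul_pow, mul_pow, hCq, hexpq, div_mul_eq_mul_div, div_mul_eq_mul_div,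
      le_div_iff₀ ha]
    nlinarith [h1]
  intro t ht
  obtain ⟨k, hk1, hk2⟩ : ∃ k : ℕ, (k : ℝ) * h ≤ t ∧ t < ((k : ℝ) + 1) * h := by
    refine ⟨Nat.floor (t / h), ?_, ?_⟩
    · rw [← le_div_iff₀ hh]
      exact Nat.floor_le (div_nonneg ht hh.le)
    · rw [← div_lt_iff₀ hh]
      exact Nat.lt_floor_add_one _
  have hxt := hx k t ⟨hk1, hk2⟩
  set s := t - (k : ℝ) * h with hs
  have hs0 : 0 ≤ s := by rw [hs]; linarith
  have hsh : s ≤ h := by rw [hs]; nlinarith [hk2]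
  have hb1 : ‖mexp s A *ᵥ xs k‖ ≤ Real.exp (‖A‖ * h) * ‖xs k‖ := by
    refine (Matrix.linfty_opNorm_mulVec _ _).trans ?_
    refine mul_le_mul_of_nonneg_right ((norm_mexp_le A s).trans ?_) (norm_nonneg _)
    apply Real.exp_le_exp.mpr
    rw [abs_of_nonneg hs0, mul_comm]
    exact mul_le_mul_of_nonneg_left hsh (norm_nonneg A)
  have hInt2 : (∫ r in (0:ℝ)..s, Real.exp (‖A‖ * r)) ≤ I := by
    have int1 : IntervalIntegrable (fun r => Real.exp (‖A‖ * r)) MeasureTheory.volume 0 s :=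
      (Real.continuous_exp.comp (continuous_const.mul continuous_id)).intervalIntegrable 0 s
    have int2 : IntervalIntegrable (fun r => Real.exp (‖A‖ * r)) MeasureTheory.volume s h :=
      (Real.continuous_exp.comp (continuous_const.mul continuous_id)).intervalIntegrable s h
    have hsplit := intervalIntegral.integral_add_adjacent_intervals int1 int2
    have hnn : 0 ≤ ∫ r in s..h, Real.exp (‖A‖ * r) :=
      intervalIntegral.integral_nonneg hsh fun r _ => (Real.exp_pos _).le
    rw [hI, ← hsplit]
    linarith
  have hb2 : ‖mint s A *ᵥ (B *ᵥ us k)‖ ≤ I * ‖B‖ * (β * ‖xs k‖) := by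
    calc ‖mint s A *ᵥ (B *ᵥ us k)‖ ≤ ‖mint s A‖ * ‖B *ᵥ us k‖ :=
          Matrix.linfty_opNorm_mulVec _ _
      _ ≤ ‖mint s A‖ * (‖B‖ * ‖us k‖) :=
          mul_le_mul_of_nonneg_left (Matrix.linfty_opNorm_mulVec _ _) (norm_nonneg _)
      _ ≤ I * (‖B‖ * (β * ‖xs k‖)) := by
          apply mul_le_mul ((norm_mint_le A hs0).trans hInt2)
            (mul_le_mul_of_nonneg_left (hu k) (norm_nonneg B)) (by positivity) hI0
      _ = I * ‖B‖ * (β * ‖xs k‖) := by ring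
  have hxtb : ‖x t‖ ≤ E * ‖xs k‖ := by
    rw [hxt]
    refine (norm_add_le _ _).trans ?_
    calc ‖mexp s A *ᵥ xs k‖ + ‖mint s A *ᵥ (B *ᵥ us k)‖ ≤
        Real.exp (‖A‖ * h) * ‖xs k‖ + I * ‖B‖ * (β * ‖xs k‖) := add_le_add hb1 hb2
      _ = E * ‖xs k‖ := by rw [hE]; ring
  have hexp : Real.exp (-(α * h * k)) ≤ Real.exp (α * h) * Real.exp (-(α * t)) := by
    rw [← Real.exp_add, Real.exp_le_exp]
    have := mul_le_mul_of_nonneg_left hk2.le hα.le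
    nlinarith
  calc ‖x t‖ ≤ E * ‖xs k‖ := hxtb
    _ ≤ E * (C * Real.exp (-(α * h * k)) * ‖xs 0‖) :=
        mul_le_mul_of_nonneg_left (hxk k) hE0
    _ ≤ E * (C * (Real.exp (α * h) * Real.exp (-(α * t))) * ‖xs 0‖) := by
        refine mul_le_mul_of_nonneg_left ?_ hE0
        exact mul_le_mul_of_nonneg_right (mul_le_mul_of_nonneg_left hexp hC0) (norm_nonneg _)
    _ = C * E * Real.exp (α * h) * Real.exp (-(α * t)) * ‖xs 0‖ := by ring
end

section
/- Let A be an n×n real matrix, B an n×m real matrix, K an m×n real matrix, P an r×n real matrix, Q an r×r real matrix, and α̂ > 0. Assume P·(A + B·K) − Q·P = 0 and, for every i ∈ {1,…,r}, Q_{ii} + Σ_{j≠i} |Q_{ij}| ≤ −α̂. Then for every t ≥ 0 and every x ∈ ℝⁿ, ‖P·exp(t(A + B·K))·x‖∞ ≤ e^{−α̂ t}·‖P·x‖∞. -/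
open Matrix

attribute [local instance] Matrix.linftyOpNormedAddCommGroup Matrix.linftyOpNormedRing
  Matrix.linftyOpNormedAlgebra

lemma mexp_intertwine {n r : ℕ} (P : Matrix (Fin r) (Fin n) ℝ) (M : Matrix (Fin n) (Fin n) ℝ)
    (Q : Matrix (Fin r) (Fin r) ℝ) (h : P * M = Q * P) (t : ℝ) :
    P * mexp t M = mexp t Q * P := by
  have h' : P * (t • M) = (t • Q) * P := by
    rw [Matrix.mul_smul, h, Matrix.smul_mul]
  have hpow : ∀ k : ℕ, P * (t • M) ^ k = (t • Q) ^ k * P := by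
    intro k; induction k with
    | zero => simp
    | succ k ih =>
      rw [pow_succ, ← Matrix.mul_assoc, ih, Matrix.mul_assoc, h', ← Matrix.mul_assoc, ← pow_succ]
  let L : Matrix (Fin n) (Fin n) ℝ →ₗ[ℝ] Matrix (Fin r) (Fin n) ℝ :=
    { toFun := fun X => P * X
      map_add' := fun X Y => Matrix.mul_add P X Y
      map_smul' := fun c X => Matrix.mul_smul P c X }
  let Rm : Matrix (Fin r) (Fin r) ℝ →ₗ[ℝ] Matrix (Fin r) (Fin n) ℝ :=
    { toFun := fun X => X * P
      map_add' := fun X Y => Matrix.add_mul X Y P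
      map_smul' := fun c X => Matrix.smul_mul c X P }
  have hLc : Continuous L := L.continuous_of_finiteDimensional
  have hRc : Continuous Rm := Rm.continuous_of_finiteDimensional
  have hsM := NormedSpace.expSeries_summable' (𝕂 := ℝ) (t • M)
  have hsQ := NormedSpace.expSeries_summable' (𝕂 := ℝ) (t • Q)
  have h1 := (hsM.hasSum.map L.toAddMonoidHom hLc).tsum_eq
  have h2 := (hsQ.hasSum.map Rm.toAddMonoidHom hRc).tsum_eq
  have e1 : P * mexp t M = ∑' k : ℕ, (k.factorial : ℝ)⁻¹ • ((t • Q) ^ k * P) := by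
    rw [mexp, NormedSpace.exp_eq_tsum (𝕂 := ℝ)]
    rw [show (P * ∑' k : ℕ, (k.factorial : ℝ)⁻¹ • (t • M) ^ k) = L (∑' k : ℕ, (k.factorial : ℝ)⁻¹ • (t • M) ^ k) from rfl]
    have h1' : L (∑' k : ℕ, (k.factorial : ℝ)⁻¹ • (t • M) ^ k)
        = ∑' k : ℕ, L ((k.factorial : ℝ)⁻¹ • (t • M) ^ k) := h1.symm
    rw [h1']
    refine tsum_congr fun k => ?_
    show L ((k.factorial : ℝ)⁻¹ • (t • M) ^ k) = _
    rw [L.map_smul]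
    show (k.factorial : ℝ)⁻¹ • (P * (t • M) ^ k) = _
    rw [hpow k]
  have e2 : mexp t Q * P = ∑' k : ℕ, (k.factorial : ℝ)⁻¹ • ((t • Q) ^ k * P) := by
    rw [mexp, NormedSpace.exp_eq_tsum (𝕂 := ℝ)]
    rw [show ((∑' k : ℕ, (k.factorial : ℝ)⁻¹ • (t • Q) ^ k) * P) = Rm (∑' k : ℕ, (k.factorial : ℝ)⁻¹ • (t • Q) ^ k) from rfl]
    have h2' : Rm (∑' k : ℕ, (k.factorial : ℝ)⁻¹ • (t • Q) ^ k)
        = ∑' k : ℕ, Rm ((k.factorial : ℝ)⁻¹ • (t • Q) ^ k) := h2.symm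
    rw [h2']
    refine tsum_congr fun k => ?_
    show Rm ((k.factorial : ℝ)⁻¹ • (t • Q) ^ k) = _
    rw [Rm.map_smul]
    rfl
  rw [e1, e2]

lemma norm_exp_le {r : ℕ} [Nonempty (Fin r)] (X : Matrix (Fin r) (Fin r) ℝ) :
    ‖NormedSpace.exp X‖ ≤ Real.exp ‖X‖ := by
  rw [NormedSpace.exp_eq_tsum (𝕂 := ℝ)]
  refine (norm_tsum_le_tsum_norm (NormedSpace.norm_expSeries_summable' (𝕂 := ℝ) X)).trans ?_
  rw [Real.exp_eq_exp_ℝ, NormedSpace.exp_eq_tsum (𝕂 := ℝ)]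
  refine Summable.tsum_le_tsum (fun k => ?_) (NormedSpace.norm_expSeries_summable' (𝕂 := ℝ) X)
    (NormedSpace.expSeries_summable' (𝕂 := ℝ) (‖X‖))
  rw [norm_smul, smul_eq_mul]
  have h1 : ‖(k.factorial : ℝ)⁻¹‖ = (k.factorial : ℝ)⁻¹ := by
    rw [Real.norm_eq_abs, abs_of_nonneg]; positivity
  rw [h1]
  refine mul_le_mul_of_nonneg_left ?_ (by positivity)
  cases k with
  | zero => simpa using norm_one.le
  | succ k => exact norm_pow_le' X k.succ_pos

lemma row_sum_le_norm {r n : ℕ} (Q : Matrix (Fin r) (Fin n) ℝ) (i : Fin r) :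
    ∑ j, |Q i j| ≤ ‖Q‖ := by
  rw [Matrix.linfty_opNorm_def]
  have h := Finset.le_sup (f := fun i : Fin r => ∑ j, ‖Q i j‖₊) (Finset.mem_univ i)
  have := NNReal.coe_le_coe.mpr h
  simpa [NNReal.coe_sum, Real.norm_eq_abs] using this

lemma norm_mexp_Q_le {r : ℕ} (Q : Matrix (Fin r) (Fin r) ℝ) (hr : 0 < r)
    (αhat : ℝ) (hα : 0 < αhat)
    (hQ : ∀ i, Q i i + ∑ j ∈ Finset.univ.erase i, |Q i j| ≤ -αhat)
    {t : ℝ} (ht : 0 ≤ t) : ‖mexp t Q‖ ≤ Real.exp (-(αhat * t)) := by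
  haveI : Nonempty (Fin r) := Fin.pos_iff_nonempty.mp hr
  set c : ℝ := αhat + ‖Q‖ with hc
  have hQii : ∀ i, -Q i i ≤ ‖Q‖ := by
    intro i
    have h1 : |Q i i| ≤ ∑ j, |Q i j| :=
      Finset.single_le_sum (f := fun j => |Q i j|) (fun j _ => abs_nonneg _) (Finset.mem_univ i)
    exact le_trans (neg_le_abs _) (le_trans h1 (row_sum_le_norm Q i))
  set R : Matrix (Fin r) (Fin r) ℝ := Q + c • 1 with hR
  have hdiag : ∀ i, (0:ℝ) ≤ Q i i + c := by
    intro i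
    have := hQii i
    have : -Q i i ≤ c := le_trans this (by rw [hc]; linarith)
    linarith
  have hrowR : ∀ i, ∑ j, |R i j| ≤ ‖Q‖ := by
    intro i
    have hRi : R i i = Q i i + c := by simp [hR, Matrix.one_apply]
    have hRj : ∀ j ∈ Finset.univ.erase i, |R i j| = |Q i j| := by
      intro j hj
      have hji : j ≠ i := Finset.ne_of_mem_erase hj
      simp [hR, Matrix.one_apply, hji.symm]
    calc ∑ j, |R i j| = |R i i| + ∑ j ∈ Finset.univ.erase i, |R i j| :=
          (Finset.add_sum_erase _ _ (Finset.mem_univ i)).symm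
      _ = (Q i i + c) + ∑ j ∈ Finset.univ.erase i, |Q i j| := by
          rw [hRi, abs_of_nonneg (hdiag i), Finset.sum_congr rfl hRj]
      _ ≤ -αhat + c := by have := hQ i; linarith
      _ = ‖Q‖ := by rw [hc]; ring
  have hRnorm : ‖R‖ ≤ ‖Q‖ := by
    rw [Matrix.linfty_opNorm_def]
    have hsup : (Finset.univ.sup fun i : Fin r => ∑ j, ‖R i j‖₊) ≤ ‖Q‖₊ := by
      refine Finset.sup_le fun i _ => ?_
      rw [← NNReal.coe_le_coe]
      simpa [NNReal.coe_sum, Real.norm_eq_abs] using hrowR i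
    simpa using NNReal.coe_le_coe.mpr hsup
  have hsplit : t • Q = t • R + (-(t * c)) • (1 : Matrix (Fin r) (Fin r) ℝ) := by
    rw [hR]; module
  have hcomm : Commute (t • R) ((-(t * c)) • (1 : Matrix (Fin r) (Fin r) ℝ)) :=
    (Commute.one_right (t • R)).smul_right _
  have hexp : mexp t Q = Real.exp (-(t * c)) • NormedSpace.exp (t • R) := by
    rw [mexp, hsplit, show NormedSpace.exp (t • R + (-(t * c)) • (1 : Matrix (Fin r) (Fin r) ℝ)) = NormedSpace.exp (t • R) * NormedSpace.exp ((-(t * c)) • (1 : Matrix (Fin r) (Fin r) ℝ)) from NormedSpace.exp_add_of_commute hcomm]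
    have : NormedSpace.exp ((-(t * c)) • (1 : Matrix (Fin r) (Fin r) ℝ))
        = Real.exp (-(t * c)) • (1 : Matrix (Fin r) (Fin r) ℝ) := by
      rw [← Algebra.algebraMap_eq_smul_one, show NormedSpace.exp (algebraMap ℝ (Matrix (Fin r) (Fin r) ℝ) (-(t * c))) = _ from (NormedSpace.algebraMap_exp_comm _).symm,
        Algebra.algebraMap_eq_smul_one, Real.exp_eq_exp_ℝ]
    rw [this, Matrix.mul_smul, Matrix.mul_one]
  rw [hexp, norm_smul, Real.norm_eq_abs, abs_of_pos (Real.exp_pos _)]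
  have h1 : ‖NormedSpace.exp (t • R)‖ ≤ Real.exp (t * ‖Q‖) := by
    refine (norm_exp_le _).trans (Real.exp_le_exp.mpr ?_)
    rw [norm_smul, Real.norm_eq_abs, abs_of_nonneg ht]
    exact mul_le_mul_of_nonneg_left hRnorm ht
  calc Real.exp (-(t * c)) * ‖NormedSpace.exp (t • R)‖
      ≤ Real.exp (-(t * c)) * Real.exp (t * ‖Q‖) :=
        mul_le_mul_of_nonneg_left h1 (Real.exp_pos _).le
    _ = Real.exp (-(αhat * t)) := by rw [← Real.exp_add]; congr 1; rw [hc]; ring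

/-- Lemma 3 (Lyapunov-decrease content): if `P(A+BK) = QP` and every row of `Q` satisfies
`Q_{ii} + Σ_{j≠i} |Q_{ij}| ≤ −α̂`, then `V(x) = ‖Px‖_∞` decays at rate `α̂` along solutions
of `dx/dt = (A+BK)x`. -/
theorem lyapunov_decrease {n m r : ℕ} (A : Matrix (Fin n) (Fin n) ℝ)
    (B : Matrix (Fin n) (Fin m) ℝ) (K : Matrix (Fin m) (Fin n) ℝ)
    (P : Matrix (Fin r) (Fin n) ℝ) (Q : Matrix (Fin r) (Fin r) ℝ)
    (αhat : ℝ) (hα : 0 < αhat)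
    (hPQ : P * (A + B * K) - Q * P = 0)
    (hQ : ∀ i, Q i i + ∑ j ∈ Finset.univ.erase i, |Q i j| ≤ -αhat) :
    ∀ t : ℝ, 0 ≤ t → ∀ x : Fin n → ℝ,
      ‖P *ᵥ (mexp t (A + B * K) *ᵥ x)‖ ≤ Real.exp (-(αhat * t)) * ‖P *ᵥ x‖ := by
  intro t ht x
  rcases Nat.eq_zero_or_pos r with hr | hr
  · subst hr
    have h0 : (P *ᵥ (mexp t (A + B * K) *ᵥ x)) = 0 := Subsingleton.elim _ _
    rw [h0, norm_zero]
    positivity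
  · have hPM : P * (A + B * K) = Q * P := sub_eq_zero.mp hPQ
    have key : P *ᵥ (mexp t (A + B * K) *ᵥ x) = mexp t Q *ᵥ (P *ᵥ x) := by
      rw [Matrix.mulVec_mulVec, Matrix.mulVec_mulVec, mexp_intertwine P _ Q hPM t]
    rw [key]
    calc ‖mexp t Q *ᵥ (P *ᵥ x)‖ ≤ ‖mexp t Q‖ * ‖P *ᵥ x‖ :=
          Matrix.linfty_opNorm_mulVec _ _
      _ ≤ Real.exp (-(αhat * t)) * ‖P *ᵥ x‖ :=
          mul_le_mul_of_nonneg_right (norm_mexp_Q_le Q hr αhat hα hQ ht) (norm_nonneg _)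
end

section
/- Let A be an n×n real matrix, B an n×m real matrix, K an m×n real matrix, P an r×n real matrix with rank(P) = n, Q an r×r real matrix, and α̂ > 0. Assume P·(A + B·K) − Q·P = 0 and, for every i ∈ {1,…,r}, Q_{ii} + Σ_{j≠i} |Q_{ij}| ≤ −α̂. Let ā = ‖P‖∞ and let a > 0 be any constant such that a·‖x‖∞ ≤ ‖P·x‖∞ for all x ∈ ℝⁿ. Then for every t ≥ 0 and every x₀ ∈ ℝⁿ, ‖exp(t(A + B·K))·x₀‖∞ ≤ (ā/a)·e^{−α̂ t}·‖x₀‖∞. -/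
open Matrix

attribute [local instance] Matrix.linftyOpNormedAddCommGroup Matrix.linftyOpNormedRing
  Matrix.linftyOpNormedAlgebra

lemma feedback_GES_entry_le {r n : ℕ} (X : Matrix (Fin r) (Fin n) ℝ) (i : Fin r) (j : Fin n) :
    |X i j| ≤ ‖X‖ := by
  have h := Matrix.linfty_opNNNorm_def X
  have h1 : ‖X i j‖₊ ≤ ∑ j', ‖X i j'‖₊ :=
    Finset.single_le_sum (f := fun j' => ‖X i j'‖₊) (fun _ _ => zero_le) (Finset.mem_univ j)
  have h2 : (∑ j', ‖X i j'‖₊) ≤ ‖X‖₊ :=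
    h ▸ Finset.le_sup (f := fun i => ∑ j, ‖X i j‖₊) (Finset.mem_univ i)
  calc |X i j| = ↑‖X i j‖₊ := (Real.norm_eq_abs _).symm
    _ ≤ (‖X‖₊ : ℝ) := by exact_mod_cast h1.trans h2
    _ = ‖X‖ := rfl

lemma feedback_GES_norm_le {r n : ℕ} [Nonempty (Fin r)] (X : Matrix (Fin r) (Fin n) ℝ) {b : ℝ}
    (hb : ∀ i, ∑ j, |X i j| ≤ b) : ‖X‖ ≤ b := by
  have hb0 : 0 ≤ b :=
    le_trans (Finset.sum_nonneg fun j _ => abs_nonneg _) (hb (Classical.arbitrary _))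
  rw [Matrix.linfty_opNorm_def]
  rw [show b = ((b.toNNReal : NNReal) : ℝ) from (Real.coe_toNNReal b hb0).symm]
  refine NNReal.coe_le_coe.2 (Finset.sup_le fun i _ => ?_)
  rw [← NNReal.coe_le_coe, Real.coe_toNNReal b hb0]
  push_cast
  simpa [Real.norm_eq_abs] using hb i

lemma feedback_GES_one_norm_le (r : ℕ) : ‖(1 : Matrix (Fin r) (Fin r) ℝ)‖ ≤ 1 := by
  rcases Nat.eq_zero_or_pos r with h | h
  · subst h
    have : (1 : Matrix (Fin 0) (Fin 0) ℝ) = 0 := by ext i j; exact i.elim0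
    simp [this]
  · haveI : Nonempty (Fin r) := ⟨⟨0, h⟩⟩
    exact le_of_eq norm_one

lemma feedback_GES_norm_exp_le {r : ℕ} (x : Matrix (Fin r) (Fin r) ℝ) :
    ‖NormedSpace.exp x‖ ≤ Real.exp ‖x‖ := by
  rw [NormedSpace.exp_eq_tsum ℝ]
  have hsum : Summable fun k : ℕ => (k.factorial : ℝ)⁻¹ * ‖x‖ ^ k := by
    simpa [div_eq_mul_inv, mul_comm] using Real.summable_pow_div_factorial ‖x‖
  calc ‖∑' (k : ℕ), (k.factorial : ℝ)⁻¹ • x ^ k‖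
      ≤ ∑' (k : ℕ), ‖(k.factorial : ℝ)⁻¹ • x ^ k‖ :=
        norm_tsum_le_tsum_norm (NormedSpace.norm_expSeries_summable' x)
    _ ≤ ∑' (k : ℕ), (k.factorial : ℝ)⁻¹ * ‖x‖ ^ k := by
        refine Summable.tsum_le_tsum (fun k => ?_) (NormedSpace.norm_expSeries_summable' x) hsum
        rw [norm_smul, norm_inv, Real.norm_natCast]
        gcongr
        cases k with
        | zero => rw [pow_zero, pow_zero]; exact feedback_GES_one_norm_le r
        | succ k => exact norm_pow_le' x k.succ_pos
    _ = Real.exp ‖x‖ := by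
        rw [Real.exp_eq_exp_ℝ, NormedSpace.exp_eq_tsum ℝ]
        simp [smul_eq_mul]

lemma feedback_GES_intertwine {n r : ℕ} (P : Matrix (Fin r) (Fin n) ℝ)
    (M : Matrix (Fin n) (Fin n) ℝ) (Q : Matrix (Fin r) (Fin r) ℝ) (h : P * M = Q * P) :
    P * NormedSpace.exp M = NormedSpace.exp Q * P := by
  have hpow : ∀ k : ℕ, P * M ^ k = Q ^ k * P := by
    intro k
    induction k with
    | zero => simp
    | succ k ih =>
      rw [pow_succ, pow_succ, ← Matrix.mul_assoc, ih, Matrix.mul_assoc, h, ← Matrix.mul_assoc]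
  let L : Matrix (Fin n) (Fin n) ℝ →ₗ[ℝ] Matrix (Fin r) (Fin n) ℝ :=
    { toFun := fun X => P * X
      map_add' := fun X Y => Matrix.mul_add P X Y
      map_smul' := fun c X => by simp [mul_smul_comm] }
  let R : Matrix (Fin r) (Fin r) ℝ →ₗ[ℝ] Matrix (Fin r) (Fin n) ℝ :=
    { toFun := fun X => X * P
      map_add' := fun X Y => Matrix.add_mul X Y P
      map_smul' := fun c X => by simp [smul_mul_assoc] }
  have hL : P * NormedSpace.exp M = ∑' (k : ℕ), (k.factorial : ℝ)⁻¹ • (P * M ^ k) := by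
    rw [NormedSpace.exp_eq_tsum ℝ]
    have := (L.toContinuousLinearMap).map_tsum (NormedSpace.expSeries_summable' (𝕂 := ℝ) M)
    simpa [L, mul_smul_comm] using this
  have hR : NormedSpace.exp Q * P = ∑' (k : ℕ), (k.factorial : ℝ)⁻¹ • (Q ^ k * P) := by
    rw [NormedSpace.exp_eq_tsum ℝ]
    have := (R.toContinuousLinearMap).map_tsum (NormedSpace.expSeries_summable' (𝕂 := ℝ) Q)
    simpa [R, smul_mul_assoc] using this
  rw [hL, hR]
  exact tsum_congr fun k => by rw [hpow k]

lemma feedback_GES_exp_bound {r : ℕ} (Q : Matrix (Fin r) (Fin r) ℝ) (αhat : ℝ)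
    [Nonempty (Fin r)]
    (hQ : ∀ i, Q i i + ∑ j ∈ Finset.univ.erase i, |Q i j| ≤ -αhat)
    {t : ℝ} (ht : 0 ≤ t) :
    ‖NormedSpace.exp (t • Q)‖ ≤ Real.exp (-(αhat * t)) := by
  set c : ℝ := ‖Q‖ with hc
  have hdiag : ∀ i : Fin r, 0 ≤ Q i i + c := by
    intro i
    have := feedback_GES_entry_le Q i i
    have h2 := neg_abs_le (Q i i)
    linarith
  have hrow : ∀ i, ∑ j, |(Q + c • (1 : Matrix (Fin r) (Fin r) ℝ)) i j| ≤ c - αhat := by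
    intro i
    have hsplit : ∑ j, |(Q + c • (1 : Matrix (Fin r) (Fin r) ℝ)) i j|
        = |Q i i + c| + ∑ j ∈ Finset.univ.erase i, |Q i j| := by
      rw [← Finset.add_sum_erase _ _ (Finset.mem_univ i)]
      congr 1
      · simp [Matrix.add_apply, Matrix.smul_apply, Matrix.one_apply]
      · refine Finset.sum_congr rfl fun j hj => ?_
        have hne : j ≠ i := Finset.ne_of_mem_erase hj
        simp [Matrix.add_apply, Matrix.smul_apply, Matrix.one_apply, hne.symm]
    rw [hsplit, abs_of_nonneg (hdiag i)]
    have := hQ i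
    linarith
  have hnorm : ‖Q + c • (1 : Matrix (Fin r) (Fin r) ℝ)‖ ≤ c - αhat :=
    feedback_GES_norm_le _ hrow
  have hcomm : Commute ((-(t * c)) • (1 : Matrix (Fin r) (Fin r) ℝ))
      (t • (Q + c • (1 : Matrix (Fin r) (Fin r) ℝ))) :=
    ((Commute.one_left _).smul_left _).smul_right _
  have hdecomp : t • Q = (-(t * c)) • (1 : Matrix (Fin r) (Fin r) ℝ)
      + t • (Q + c • (1 : Matrix (Fin r) (Fin r) ℝ)) := by
    rw [smul_add, smul_smul]
    module
  rw [hdecomp, Matrix.exp_add_of_commute _ _ hcomm]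
  have hexp1 : NormedSpace.exp ((-(t * c)) • (1 : Matrix (Fin r) (Fin r) ℝ))
      = Real.exp (-(t * c)) • (1 : Matrix (Fin r) (Fin r) ℝ) := by
    rw [show ((-(t * c)) • (1 : Matrix (Fin r) (Fin r) ℝ))
        = algebraMap ℝ (Matrix (Fin r) (Fin r) ℝ) (-(t * c)) from
        (Algebra.algebraMap_eq_smul_one _).symm]
    erw [← NormedSpace.algebraMap_exp_comm]
    rw [← Real.exp_eq_exp_ℝ,
      Algebra.algebraMap_eq_smul_one]
  rw [hexp1, smul_mul_assoc, one_mul, norm_smul, Real.norm_eq_abs,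
    abs_of_pos (Real.exp_pos _)]
  calc Real.exp (-(t * c)) * ‖NormedSpace.exp (t • (Q + c • (1 : Matrix (Fin r) (Fin r) ℝ)))‖
      ≤ Real.exp (-(t * c)) * Real.exp ‖t • (Q + c • (1 : Matrix (Fin r) (Fin r) ℝ))‖ := by
        have := feedback_GES_norm_exp_le (t • (Q + c • (1 : Matrix (Fin r) (Fin r) ℝ)))
        exact mul_le_mul_of_nonneg_left this (Real.exp_pos _).le
    _ ≤ Real.exp (-(t * c)) * Real.exp (t * (c - αhat)) := by
        have h3 : ‖t • (Q + c • (1 : Matrix (Fin r) (Fin r) ℝ))‖ ≤ t * (c - αhat) := by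
          rw [norm_smul, Real.norm_eq_abs, abs_of_nonneg ht]
          exact mul_le_mul_of_nonneg_left hnorm ht
        exact mul_le_mul_of_nonneg_left (Real.exp_le_exp.2 h3) (Real.exp_pos _).le
    _ = Real.exp (-(αhat * t)) := by
        rw [← Real.exp_add]; ring_nf

/-- Lemma 3: the linear state feedback `u = Kx` renders `dx/dt = Ax + Bu` GES with
convergence rate `α̂` and gain `ĉ = ‖P‖_∞ / a`. -/
theorem feedback_GES {n m r : ℕ} (A : Matrix (Fin n) (Fin n) ℝ)
    (B : Matrix (Fin n) (Fin m) ℝ) (K : Matrix (Fin m) (Fin n) ℝ)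
    (P : Matrix (Fin r) (Fin n) ℝ) (Q : Matrix (Fin r) (Fin r) ℝ)
    (αhat a : ℝ) (hα : 0 < αhat) (hrank : P.rank = n)
    (hPQ : P * (A + B * K) - Q * P = 0)
    (hQ : ∀ i, Q i i + ∑ j ∈ Finset.univ.erase i, |Q i j| ≤ -αhat)
    (ha : 0 < a) (hlow : ∀ x : Fin n → ℝ, a * ‖x‖ ≤ ‖P *ᵥ x‖) :
    ∀ t : ℝ, 0 ≤ t → ∀ x₀ : Fin n → ℝ,
      ‖mexp t (A + B * K) *ᵥ x₀‖ ≤ (‖P‖ / a) * Real.exp (-(αhat * t)) * ‖x₀‖ := by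
  intro t ht x₀
  rcases Nat.eq_zero_or_pos r with hr | hr
  · subst hr
    have h0 : ‖mexp t (A + B * K) *ᵥ x₀‖ = 0 := by
      have h1 := hlow (mexp t (A + B * K) *ᵥ x₀)
      have h2 : (P *ᵥ (mexp t (A + B * K) *ᵥ x₀)) = 0 := Subsingleton.elim _ _
      rw [h2, norm_zero] at h1
      have := norm_nonneg (mexp t (A + B * K) *ᵥ x₀)
      nlinarith
    rw [h0]
    positivity
  · haveI : Nonempty (Fin r) := ⟨⟨0, hr⟩⟩
    set M := A + B * K with hM
    have hPM : P * M = Q * P := sub_eq_zero.mp hPQ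
    have hPMt : P * (t • M) = (t • Q) * P := by
      rw [Matrix.mul_smul, Matrix.smul_mul, hPM]
    have hint : P * mexp t M = NormedSpace.exp (t • Q) * P :=
      feedback_GES_intertwine P (t • M) (t • Q) hPMt
    have hbound := feedback_GES_exp_bound Q αhat hQ ht
    set y := mexp t M *ᵥ x₀ with hy
    have key : a * ‖y‖ ≤ Real.exp (-(αhat * t)) * (‖P‖ * ‖x₀‖) := by
      calc a * ‖y‖ ≤ ‖P *ᵥ y‖ := hlow y
        _ = ‖(P * mexp t M) *ᵥ x₀‖ := by rw [hy, Matrix.mulVec_mulVec]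
        _ = ‖NormedSpace.exp (t • Q) *ᵥ (P *ᵥ x₀)‖ := by
            rw [hint, ← Matrix.mulVec_mulVec]
        _ ≤ ‖NormedSpace.exp (t • Q)‖ * ‖P *ᵥ x₀‖ := Matrix.linfty_opNorm_mulVec _ _
        _ ≤ Real.exp (-(αhat * t)) * (‖P‖ * ‖x₀‖) :=
            mul_le_mul hbound (Matrix.linfty_opNorm_mulVec _ _) (norm_nonneg _)
              (Real.exp_pos _).le
    have hfin : ‖y‖ ≤ (Real.exp (-(αhat * t)) * (‖P‖ * ‖x₀‖)) / a :=
      (le_div_iff₀ ha).mpr (by rw [mul_comm]; exact key)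
    exact hfin.trans_eq (by ring)
end

section
/- Let A be an n×n real matrix, B an n×m real matrix, K an m×n real matrix, P an r×n real matrix with rank(P) = n, α > 0, h > 0, and 0 < a ≤ ā such that a·‖x‖∞ ≤ ‖P·x‖∞ ≤ ā·‖x‖∞ for all x ∈ ℝⁿ. Assume ‖P·(exp(hA) + (∫₀^h exp(sA) ds)·B·K)·(Pᵀ·P)⁻¹·Pᵀ‖∞ ≤ e^{−αh}. Define the sampled-data closed loop from x₀ ∈ ℝⁿ by x_0 = x₀, x_{k+1} = exp(hA)·x_k + (∫₀^h exp(sA) ds)·B·K·x_k, and x(t) = exp((t−kh)A)·x_k + (∫₀^{t−kh} exp(sA) ds)·B·K·x_k for t ∈ [kh,(k+1)h), k ∈ ℕ. Then for all t ≥ 0, ‖x(t)‖∞ ≤ c·e^{−αt}·‖x₀‖∞, where c = (ā/a)·(e^{‖A‖∞ h} + ‖K‖∞·(∫₀^h e^{‖A‖∞ s} ds)·‖B‖∞)·e^{αh}. -/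
open Matrix

attribute [local instance] Matrix.linftyOpNormedAddCommGroup Matrix.linftyOpNormedRing
  Matrix.linftyOpNormedAlgebra

section Aux

variable {n : ℕ}

lemma norm_exp_le_aux [Nonempty (Fin n)] (M : Matrix (Fin n) (Fin n) ℝ) :
    ‖NormedSpace.exp M‖ ≤ Real.exp ‖M‖ := by
  rw [NormedSpace.exp_eq_tsum (𝕂 := ℝ), Real.exp_eq_exp_ℝ, NormedSpace.exp_eq_tsum_div]
  refine le_trans (norm_tsum_le_tsum_norm (NormedSpace.norm_expSeries_summable' M)) ?_
  refine Summable.tsum_le_tsum (fun i => ?_) (NormedSpace.norm_expSeries_summable' M)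
    (NormedSpace.expSeries_div_summable ‖M‖)
  rw [norm_smul, norm_inv, Real.norm_natCast, div_eq_inv_mul]
  exact mul_le_mul_of_nonneg_left (norm_pow_le M i)
    (inv_nonneg.mpr (Nat.cast_nonneg _))

lemma norm_mexp_le_aux [Nonempty (Fin n)] (A : Matrix (Fin n) (Fin n) ℝ) {s : ℝ}
    (hs : 0 ≤ s) : ‖mexp s A‖ ≤ Real.exp (‖A‖ * s) := by
  refine le_trans (norm_exp_le_aux _) (Real.exp_le_exp.mpr ?_)
  rw [norm_smul, Real.norm_eq_abs, abs_of_nonneg hs, mul_comm]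

lemma mexp_continuous (A : Matrix (Fin n) (Fin n) ℝ) :
    Continuous fun s : ℝ => mexp s A :=
  NormedSpace.exp_continuous.comp (continuous_id.smul continuous_const)

lemma mint_eq (A : Matrix (Fin n) (Fin n) ℝ) (τ : ℝ) :
    mint τ A = ∫ s in (0:ℝ)..τ, mexp s A := by
  have hInt : @IntervalIntegrable _ _ NormedAddGroup.toENormedAddMonoid (fun s => mexp s A) MeasureTheory.volume 0 τ :=
    (mexp_continuous A).intervalIntegrable _ _
  ext i j
  have := (LinearMap.toContinuousLinearMap
      (Matrix.entryLinearMap ℝ ℝ i j)).intervalIntegral_comp_comm hInt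
  rw [mint, of_apply]; exact this

lemma norm_mint_le_aux [Nonempty (Fin n)] (A : Matrix (Fin n) (Fin n) ℝ) {τ h : ℝ}
    (h0 : 0 ≤ τ) (hτ : τ ≤ h) :
    ‖mint τ A‖ ≤ ∫ s in (0:ℝ)..h, Real.exp (‖A‖ * s) := by
  rw [mint_eq]
  calc ‖∫ s in (0:ℝ)..τ, mexp s A‖ ≤ ∫ s in (0:ℝ)..τ, ‖mexp s A‖ :=
        intervalIntegral.norm_integral_le_integral_norm h0
    _ ≤ ∫ s in (0:ℝ)..τ, Real.exp (‖A‖ * s) := by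
        refine intervalIntegral.integral_mono_on h0
          ((mexp_continuous A).norm.intervalIntegrable _ _)
          ((Real.continuous_exp.comp (continuous_const.mul continuous_id)).intervalIntegrable _ _)
          (fun s hs => norm_mexp_le_aux A hs.1)
    _ ≤ ∫ s in (0:ℝ)..h, Real.exp (‖A‖ * s) := by
        refine intervalIntegral.integral_mono_interval le_rfl h0 hτ
          (Filter.Eventually.of_forall fun s => (Real.exp_pos _).le)
          ((Real.continuous_exp.comp (continuous_const.mul continuous_id)).intervalIntegrable _ _)

end Aux

/-- Lemma 4: for interexecution times `h` with
`‖P(e^{hA} + (∫₀ʰ e^{sA}ds)BK)(PᵀP)⁻¹Pᵀ‖_∞ ≤ e^{−αh}`, the emulated sampled-data state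
feedback `u(t) = K x(kh)` on `[kh,(k+1)h)` is GES with rate `α` and the stated gain. -/
theorem sampled_feedback_GES {n m r : ℕ} (A : Matrix (Fin n) (Fin n) ℝ)
    (B : Matrix (Fin n) (Fin m) ℝ) (K : Matrix (Fin m) (Fin n) ℝ)
    (P : Matrix (Fin r) (Fin n) ℝ) (α h a abar : ℝ)
    (hα : 0 < α) (hh : 0 < h) (ha : 0 < a) (hab : a ≤ abar) (hrank : P.rank = n)
    (hsand : ∀ x : Fin n → ℝ, a * ‖x‖ ≤ ‖P *ᵥ x‖ ∧ ‖P *ᵥ x‖ ≤ abar * ‖x‖)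
    (hnorm : ‖P * (mexp h A + mint h A * B * K) * (Pᵀ * P)⁻¹ * Pᵀ‖ ≤ Real.exp (-(α * h)))
    (x₀ : Fin n → ℝ) (xs : ℕ → Fin n → ℝ) (hxs0 : xs 0 = x₀)
    (hstep : ∀ k, xs (k + 1) = mexp h A *ᵥ xs k + mint h A *ᵥ (B *ᵥ (K *ᵥ xs k)))
    (x : ℝ → Fin n → ℝ)
    (hx : ∀ (k : ℕ) (t : ℝ), t ∈ Set.Ico ((k : ℝ) * h) (((k : ℝ) + 1) * h) →
      x t = mexp (t - (k : ℝ) * h) A *ᵥ xs k + mint (t - (k : ℝ) * h) A *ᵥ (B *ᵥ (K *ᵥ xs k))) :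
    ∀ t : ℝ, 0 ≤ t →
      ‖x t‖ ≤ (abar / a) *
        (Real.exp (‖A‖ * h) + ‖K‖ * (∫ s in (0:ℝ)..h, Real.exp (‖A‖ * s)) * ‖B‖) *
        Real.exp (α * h) * Real.exp (-(α * t)) * ‖x₀‖ := by
  intro t ht
  rcases Nat.eq_zero_or_pos n with hn | hn
  · subst hn
    have h1 : x t = 0 := Subsingleton.elim _ _
    have h2 : x₀ = 0 := Subsingleton.elim _ _
    rw [h1, h2, norm_zero, mul_zero]
  haveI : Nonempty (Fin n) := ⟨⟨0, hn⟩⟩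
  -- invertibility of PᵀP
  have hker : ∀ w : Fin n → ℝ, (Pᵀ * P) *ᵥ w = 0 → w = 0 := by
    intro w h0
    have hdot : (P *ᵥ w) ⬝ᵥ (P *ᵥ w) = 0 := by
      rw [dotProduct_mulVec, ← mulVec_transpose, mulVec_mulVec, h0, zero_dotProduct]
    have hPw : P *ᵥ w = 0 := dotProduct_self_eq_zero.mp hdot
    have := (hsand w).1
    rw [hPw, norm_zero] at this
    have : ‖w‖ ≤ 0 := by nlinarith [norm_nonneg w]
    exact norm_le_zero_iff.mp this
  have hinj : Function.Injective ((Pᵀ * P).mulVec) := by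
    intro u v huv
    have := hker (u - v) (by rw [mulVec_sub, huv, sub_self])
    exact sub_eq_zero.mp this
  have hunit : IsUnit (Pᵀ * P) := mulVec_injective_iff_isUnit.mp hinj
  have hinvmul : (Pᵀ * P)⁻¹ * (Pᵀ * P) = 1 :=
    nonsing_inv_mul _ ((isUnit_iff_isUnit_det _).mp hunit)
  have hid : ∀ v : Fin n → ℝ, ((Pᵀ * P)⁻¹ * Pᵀ) *ᵥ (P *ᵥ v) = v := by
    intro v
    rw [mulVec_mulVec, Matrix.mul_assoc, hinvmul, Matrix.one_mulVec]
  -- discrete decay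
  set M : Matrix (Fin n) (Fin n) ℝ := mexp h A + mint h A * B * K with hM
  have hstep' : ∀ k, xs (k + 1) = M *ᵥ xs k := by
    intro k
    rw [hstep k, hM, add_mulVec, ← mulVec_mulVec, ← mulVec_mulVec]
  have hdec : ∀ k : ℕ, ‖P *ᵥ xs k‖ ≤ Real.exp (-(α * h)) ^ k * ‖P *ᵥ x₀‖ := by
    intro k
    induction k with
    | zero => simp [hxs0]
    | succ k ih =>
      have e1 : P *ᵥ xs (k + 1) = (P * M * (Pᵀ * P)⁻¹ * Pᵀ) *ᵥ (P *ᵥ xs k) := by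
        rw [hstep' k, mulVec_mulVec]
        conv_lhs => rw [← hid (xs k)]
        simp only [mulVec_mulVec, Matrix.mul_assoc]
      calc ‖P *ᵥ xs (k + 1)‖ ≤ ‖P * M * (Pᵀ * P)⁻¹ * Pᵀ‖ * ‖P *ᵥ xs k‖ := by
            rw [e1]; exact linfty_opNorm_mulVec _ _
        _ ≤ Real.exp (-(α * h)) * (Real.exp (-(α * h)) ^ k * ‖P *ᵥ x₀‖) := by
            exact mul_le_mul hnorm ih (norm_nonneg _) (Real.exp_pos _).le
        _ = Real.exp (-(α * h)) ^ (k + 1) * ‖P *ᵥ x₀‖ := by ring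
  -- pick the sampling interval containing t
  set k : ℕ := ⌊t / h⌋₊ with hk
  have hk1 : (k : ℝ) * h ≤ t := by
    have h1 : (k : ℝ) ≤ t / h := Nat.floor_le (div_nonneg ht hh.le)
    calc (k : ℝ) * h ≤ (t / h) * h := mul_le_mul_of_nonneg_right h1 hh.le
      _ = t := div_mul_cancel₀ t hh.ne'
  have hk2 : t < ((k : ℝ) + 1) * h := by
    have h1 : t / h < (k : ℝ) + 1 := Nat.lt_floor_add_one (t / h)
    calc t = (t / h) * h := (div_mul_cancel₀ t hh.ne').symm
      _ < ((k : ℝ) + 1) * h := mul_lt_mul_of_pos_right h1 hh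
  set τ : ℝ := t - (k : ℝ) * h with hτdef
  have hτ0 : 0 ≤ τ := by simp [hτdef]; linarith
  have hτh : τ ≤ h := by simp [hτdef]; nlinarith
  have hxt : x t = mexp τ A *ᵥ xs k + mint τ A *ᵥ (B *ᵥ (K *ᵥ xs k)) :=
    hx k t ⟨hk1, hk2⟩
  set IB : ℝ := ∫ s in (0:ℝ)..h, Real.exp (‖A‖ * s) with hIB
  have hIB0 : 0 ≤ IB :=
    intervalIntegral.integral_nonneg hh.le (fun s _ => (Real.exp_pos _).le)
  set C : ℝ := Real.exp (‖A‖ * h) + ‖K‖ * IB * ‖B‖ with hC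
  have hC0 : 0 ≤ C := by
    rw [hC]
    have h1 := mul_nonneg (mul_nonneg (norm_nonneg K) hIB0) (norm_nonneg B)
    linarith [(Real.exp_pos (‖A‖ * h)).le]
  -- intersample bound
  have hxtle : ‖x t‖ ≤ C * ‖xs k‖ := by
    have e1 : ‖mexp τ A‖ ≤ Real.exp (‖A‖ * h) :=
      le_trans (norm_mexp_le_aux A hτ0)
        (Real.exp_le_exp.mpr (mul_le_mul_of_nonneg_left hτh (norm_nonneg A)))
    have e2 : ‖mint τ A‖ ≤ IB := norm_mint_le_aux A hτ0 hτh
    have e3 : ‖B *ᵥ (K *ᵥ xs k)‖ ≤ ‖B‖ * (‖K‖ * ‖xs k‖) :=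
      le_trans (linfty_opNorm_mulVec _ _)
        (mul_le_mul_of_nonneg_left (linfty_opNorm_mulVec _ _) (norm_nonneg B))
    calc ‖x t‖ ≤ ‖mexp τ A *ᵥ xs k‖ + ‖mint τ A *ᵥ (B *ᵥ (K *ᵥ xs k))‖ := by
          rw [hxt]; exact norm_add_le _ _
      _ ≤ ‖mexp τ A‖ * ‖xs k‖ + ‖mint τ A‖ * ‖B *ᵥ (K *ᵥ xs k)‖ :=
          add_le_add (linfty_opNorm_mulVec _ _) (linfty_opNorm_mulVec _ _)
      _ ≤ Real.exp (‖A‖ * h) * ‖xs k‖ + IB * (‖B‖ * (‖K‖ * ‖xs k‖)) := by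
          have h4 : ‖mint τ A‖ * ‖B *ᵥ (K *ᵥ xs k)‖ ≤ IB * (‖B‖ * (‖K‖ * ‖xs k‖)) :=
            mul_le_mul e2 e3 (norm_nonneg _) hIB0
          have h5 : ‖mexp τ A‖ * ‖xs k‖ ≤ Real.exp (‖A‖ * h) * ‖xs k‖ :=
            mul_le_mul_of_nonneg_right e1 (norm_nonneg _)
          linarith
      _ = C * ‖xs k‖ := by rw [hC]; ring
  -- discrete decay at step k with rate conversion
  have hEk : Real.exp (-(α * h)) ^ k ≤ Real.exp (α * h) * Real.exp (-(α * t)) := by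
    rw [← Real.exp_nat_mul, ← Real.exp_add]
    refine Real.exp_le_exp.mpr ?_
    have : (k : ℝ) * h ≤ t := hk1
    nlinarith
  have hNk : ‖xs k‖ ≤ (abar / a) * (Real.exp (α * h) * Real.exp (-(α * t))) * ‖x₀‖ := by
    have h1 : a * ‖xs k‖ ≤ ‖P *ᵥ xs k‖ := (hsand (xs k)).1
    have h2 : ‖P *ᵥ x₀‖ ≤ abar * ‖x₀‖ := (hsand x₀).2
    have h3 : ‖P *ᵥ xs k‖ ≤ Real.exp (-(α * h)) ^ k * ‖P *ᵥ x₀‖ := hdec k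
    have hE0 : (0:ℝ) ≤ Real.exp (-(α * h)) ^ k := (pow_pos (Real.exp_pos _) k).le
    have h4 : a * ‖xs k‖ ≤ (Real.exp (α * h) * Real.exp (-(α * t))) * (abar * ‖x₀‖) := by
      have h5 : ‖P *ᵥ xs k‖ ≤ Real.exp (-(α * h)) ^ k * (abar * ‖x₀‖) :=
        le_trans h3 (mul_le_mul_of_nonneg_left h2 hE0)
      have h6 : Real.exp (-(α * h)) ^ k * (abar * ‖x₀‖) ≤
          (Real.exp (α * h) * Real.exp (-(α * t))) * (abar * ‖x₀‖) := by
        have hab0 : 0 ≤ abar * ‖x₀‖ :=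
          mul_nonneg (le_trans ha.le hab) (norm_nonneg _)
        exact mul_le_mul_of_nonneg_right hEk hab0
      linarith
    rw [div_mul_eq_mul_div, div_mul_eq_mul_div, le_div_iff₀ ha]
    nlinarith
  calc ‖x t‖ ≤ C * ‖xs k‖ := hxtle
    _ ≤ C * ((abar / a) * (Real.exp (α * h) * Real.exp (-(α * t))) * ‖x₀‖) :=
        mul_le_mul_of_nonneg_left hNk hC0
    _ = (abar / a) * C * Real.exp (α * h) * Real.exp (-(α * t)) * ‖x₀‖ := by ring
end

section
/- Let A be an n×n real matrix, B an n×m real matrix, K an m×n real matrix, P an r×n real matrix with rank(P) = n, α > 0, β ≥ ‖K‖∞, and ℏ₁ > 0. Assume ‖P·(exp(ℏ₁A) + (∫₀^{ℏ₁} exp(sA) ds)·B·K)·(Pᵀ·P)⁻¹·Pᵀ‖∞ ≤ e^{−αℏ₁}. Then for every x ∈ ℝⁿ, the input u = K·x satisfies ‖u‖∞ ≤ β·‖x‖∞ and ‖P·(exp(ℏ₁A)·x + (∫₀^{ℏ₁} exp(sA) ds)·B·u)‖∞ ≤ e^{−αℏ₁}·‖P·x‖∞; in particular, the set F₁(x)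 = { u ∈ ℝᵐ : ‖P·(exp(ℏ₁A)·x + (∫₀^{ℏ₁} exp(sA) ds)·B·u)‖∞ − e^{−αℏ₁}·‖P·x‖∞ ≤ 0 and ‖u‖∞ ≤ β·‖x‖∞ } is nonempty. -/
open Matrix

attribute [local instance] Matrix.linftyOpNormedAddCommGroup Matrix.linftyOpNormedRing
  Matrix.linftyOpNormedAlgebra

/-- A real matrix with full column rank has invertible `Pᵀ * P`. -/
lemma isUnit_transpose_mul_self {n r : ℕ} (P : Matrix (Fin r) (Fin n) ℝ)
    (hrank : P.rank = n) : IsUnit (Pᵀ * P) := by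
  have h : (Pᵀ * P).rank = n := by
    rw [Matrix.rank_transpose_mul_self, hrank]
  rw [← Matrix.mulVec_surjective_iff_isUnit]
  have htop : LinearMap.range (Pᵀ * P).mulVecLin = ⊤ :=
    Submodule.eq_top_of_finrank_eq (by simpa [Matrix.rank] using h)
  intro y
  obtain ⟨x, hx⟩ := (LinearMap.range_eq_top.1 htop) y
  exact ⟨x, hx⟩

/-- Well-definedness content of Theorem 3: under the norm condition for the shortest
interexecution time `ℏ₁`, the input `u = Kx` is feasible, so the minimum attention
feasible set `F₁(x)` is nonempty for every `x`. -/
theorem mac_well_defined {n m r : ℕ} (A : Matrix (Fin n) (Fin n) ℝ)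
    (B : Matrix (Fin n) (Fin m) ℝ) (K : Matrix (Fin m) (Fin n) ℝ)
    (P : Matrix (Fin r) (Fin n) ℝ) (α β ℏ₁ : ℝ)
    (hα : 0 < α) (hβ : ‖K‖ ≤ β) (hℏ : 0 < ℏ₁) (hrank : P.rank = n)
    (hnorm : ‖P * (mexp ℏ₁ A + mint ℏ₁ A * B * K) * (Pᵀ * P)⁻¹ * Pᵀ‖ ≤ Real.exp (-(α * ℏ₁))) :
    ∀ x : Fin n → ℝ,
      (‖K *ᵥ x‖ ≤ β * ‖x‖ ∧
        ‖P *ᵥ (mexp ℏ₁ A *ᵥ x + mint ℏ₁ A *ᵥ (B *ᵥ (K *ᵥ x)))‖ ≤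
          Real.exp (-(α * ℏ₁)) * ‖P *ᵥ x‖) ∧
      { u : Fin m → ℝ |
          ‖P *ᵥ (mexp ℏ₁ A *ᵥ x + mint ℏ₁ A *ᵥ (B *ᵥ u))‖ -
            Real.exp (-(α * ℏ₁)) * ‖P *ᵥ x‖ ≤ 0 ∧
          ‖u‖ ≤ β * ‖x‖ }.Nonempty := by
  intro x
  set G := mexp ℏ₁ A + mint ℏ₁ A * B * K with hG
  set M := P * G * (Pᵀ * P)⁻¹ * Pᵀ with hM
  -- u = K x satisfies the norm bound on the input
  have hKx : ‖K *ᵥ x‖ ≤ β * ‖x‖ :=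
    (Matrix.linfty_opNorm_mulVec K x).trans
      (mul_le_mul_of_nonneg_right hβ (norm_nonneg x))
  -- the key algebraic identity
  have hunit : IsUnit (Pᵀ * P) := isUnit_transpose_mul_self P hrank
  have hinv : (Pᵀ * P)⁻¹ * (Pᵀ * P) = 1 :=
    Matrix.nonsing_inv_mul _ ((Matrix.isUnit_iff_isUnit_det _).1 hunit)
  have hMP : M * P = P * G := by
    rw [hM, Matrix.mul_assoc (P * G * (Pᵀ * P)⁻¹), Matrix.mul_assoc (P * G),
      hinv, Matrix.mul_one]
  have hvec : P *ᵥ (mexp ℏ₁ A *ᵥ x + mint ℏ₁ A *ᵥ (B *ᵥ (K *ᵥ x))) = M *ᵥ (P *ᵥ x) := by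
    have h1 : P *ᵥ (mexp ℏ₁ A *ᵥ x + mint ℏ₁ A *ᵥ (B *ᵥ (K *ᵥ x))) = (P * G) *ᵥ x := by
      simp [hG, Matrix.add_mulVec, Matrix.mulVec_mulVec, Matrix.mulVec_add,
        Matrix.mul_add, Matrix.mul_assoc]
    rw [h1, ← hMP, ← Matrix.mulVec_mulVec]
  have hdecay : ‖P *ᵥ (mexp ℏ₁ A *ᵥ x + mint ℏ₁ A *ᵥ (B *ᵥ (K *ᵥ x)))‖ ≤
      Real.exp (-(α * ℏ₁)) * ‖P *ᵥ x‖ := by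
    rw [hvec]
    exact (Matrix.linfty_opNorm_mulVec M (P *ᵥ x)).trans
      (mul_le_mul_of_nonneg_right hnorm (norm_nonneg _))
  exact ⟨⟨hKx, hdecay⟩, ⟨K *ᵥ x, by simpa using hdecay, hKx⟩⟩
end

section
/- Let A be an n×n real matrix, B an n×m real matrix, K an m×n real matrix, P an r×n real matrix with rank(P) = n, ᾱ₁ > 0, β ≥ ‖K‖∞, and let 0 < ℏ₁ < ℏ₂ < … < ℏ_L (L ≥ 1). Assume that for every l ∈ {1,…,L}, ‖P·(exp(ℏ_l A) + (∫₀^{ℏ_l} exp(sA) ds)·B·K)·(Pᵀ·P)⁻¹·Pᵀ‖∞ ≤ e^{−ᾱ₁ ℏ_l}. Then for every x ∈ ℝⁿ, the input u = K·x satisfies ‖u‖∞ ≤ β·‖x‖∞ and, for every l ∈ {1,…,L}, ‖P·(exp(ℏ_l A)·x + (∫₀^{ℏ_l} exp(sA) ds)·B·u)‖∞ ≤ e^{−ᾱ₁ ℏ_l}·‖P·x‖∞; in particular, the set F_{L,1}(x) = { u ∈ ℝᵐ : ‖P·(exp(ℏ_l A)·x + (∫₀^{ℏ_l} exp(sA)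 ds)·B·u)‖∞ − e^{−ᾱ₁ ℏ_l}·‖P·x‖∞ ≤ 0 for all l ∈ {1,…,L}, and ‖u‖∞ ≤ β·‖x‖∞ } is nonempty. -/
open Matrix

attribute [local instance] Matrix.linftyOpNormedAddCommGroup Matrix.linftyOpNormedRing
  Matrix.linftyOpNormedAlgebra

/-- Well-definedness content of Theorem 4: under the norm conditions for all interexecution
times `ℏ₁,…,ℏ_L` at the smallest rate `ᾱ₁`, the input `u = Kx` is feasible, so the anytime
attention feasible set `F_{L,1}(x)` is nonempty for every `x`. -/
theorem aac_well_defined {n m r : ℕ} (A : Matrix (Fin n) (Fin n) ℝ)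
    (B : Matrix (Fin n) (Fin m) ℝ) (K : Matrix (Fin m) (Fin n) ℝ)
    (P : Matrix (Fin r) (Fin n) ℝ) (ᾱ₁ β : ℝ) (L : ℕ) (ℏ : ℕ → ℝ)
    (hα : 0 < ᾱ₁) (hβ : ‖K‖ ≤ β) (hL : 1 ≤ L) (hrank : P.rank = n)
    (hℏ1 : 0 < ℏ 1) (hℏmono : ∀ l, 1 ≤ l → l < L → ℏ l < ℏ (l + 1))
    (hnorm : ∀ l, 1 ≤ l → l ≤ L →
      ‖P * (mexp (ℏ l) A + mint (ℏ l) A * B * K) * (Pᵀ * P)⁻¹ * Pᵀ‖ ≤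
        Real.exp (-(ᾱ₁ * ℏ l))) :
    ∀ x : Fin n → ℝ,
      (‖K *ᵥ x‖ ≤ β * ‖x‖ ∧
        ∀ l, 1 ≤ l → l ≤ L →
          ‖P *ᵥ (mexp (ℏ l) A *ᵥ x + mint (ℏ l) A *ᵥ (B *ᵥ (K *ᵥ x)))‖ ≤
            Real.exp (-(ᾱ₁ * ℏ l)) * ‖P *ᵥ x‖) ∧
      { u : Fin m → ℝ |
          (∀ l, 1 ≤ l → l ≤ L →
            ‖P *ᵥ (mexp (ℏ l) A *ᵥ x + mint (ℏ l) A *ᵥ (B *ᵥ u))‖ -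
              Real.exp (-(ᾱ₁ * ℏ l)) * ‖P *ᵥ x‖ ≤ 0) ∧
          ‖u‖ ≤ β * ‖x‖ }.Nonempty := by
    -- (PᵀP) is invertible
  have hunit : IsUnit (Pᵀ * P) := by
    rw [← Matrix.mulVec_injective_iff_isUnit]
    rw [show (Pᵀ * P).mulVec = (Pᵀ * P).mulVecLin from rfl, ← LinearMap.ker_eq_bot,
      Matrix.ker_mulVecLin_transpose_mul_self]
    have h := LinearMap.finrank_range_add_finrank_ker P.mulVecLin
    rw [Matrix.rank] at hrank
    rw [hrank] at h
    simp only [Module.finrank_fintype_fun_eq_card, Fintype.card_fin] at h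
    have h0 : Module.finrank ℝ (LinearMap.ker P.mulVecLin) = 0 := by omega
    exact Submodule.finrank_eq_zero.mp h0
  have hinv : (Pᵀ * P)⁻¹ * (Pᵀ * P) = 1 :=
    Matrix.nonsing_inv_mul _ (Matrix.isUnit_iff_isUnit_det _ |>.mp hunit)
  intro x
  have hK : ‖K *ᵥ x‖ ≤ β * ‖x‖ :=
    le_trans (Matrix.linfty_opNorm_mulVec K x)
      (mul_le_mul_of_nonneg_right hβ (norm_nonneg x))
  have key : ∀ l, 1 ≤ l → l ≤ L →
      ‖P *ᵥ (mexp (ℏ l) A *ᵥ x + mint (ℏ l) A *ᵥ (B *ᵥ (K *ᵥ x)))‖ ≤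
        Real.exp (-(ᾱ₁ * ℏ l)) * ‖P *ᵥ x‖ := by
    intro l hl1 hlL
    set M := P * (mexp (ℏ l) A + mint (ℏ l) A * B * K) with hM
    have hvec : P *ᵥ (mexp (ℏ l) A *ᵥ x + mint (ℏ l) A *ᵥ (B *ᵥ (K *ᵥ x))) =
        (M * (Pᵀ * P)⁻¹ * Pᵀ) *ᵥ (P *ᵥ x) := by
      have hMid : M * (Pᵀ * P)⁻¹ * Pᵀ * P = M := by
        rw [Matrix.mul_assoc, Matrix.mul_assoc, hinv, Matrix.mul_one]
      have h2 : (M * (Pᵀ * P)⁻¹ * Pᵀ) *ᵥ (P *ᵥ x) = M *ᵥ x := by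
        rw [Matrix.mulVec_mulVec, hMid]
      rw [h2, hM]
      simp [Matrix.add_mulVec, Matrix.mulVec_add, Matrix.mulVec_mulVec, Matrix.mul_assoc,
        Matrix.mul_add]
    rw [hvec]
    calc ‖(M * (Pᵀ * P)⁻¹ * Pᵀ) *ᵥ (P *ᵥ x)‖
        ≤ ‖M * (Pᵀ * P)⁻¹ * Pᵀ‖ * ‖P *ᵥ x‖ := Matrix.linfty_opNorm_mulVec _ _
      _ ≤ Real.exp (-(ᾱ₁ * ℏ l)) * ‖P *ᵥ x‖ :=
          mul_le_mul_of_nonneg_right (hnorm l hl1 hlL) (norm_nonneg _)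
  refine ⟨⟨hK, key⟩, ⟨K *ᵥ x, ?_, hK⟩⟩
  intro l hl1 hlL
  linarith [key l hl1 hlL]
end
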